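/- A point x* ∈ ℝᴺ is an extended equilibrium of the path-graph dynamics with integer vector k if and only if x*_1 = k₂, x*_N = k_{N-1}, x*_i = (k_{i-1} + k_{i+1})/2 for 2 ≤ i ≤ N-1, and k satisfies k₁ = k₂, k_N = k_{N-1}, and |k_{i+1} - 2k_i + k_{i-1}| ≤ 1 for 2 ≤ i ≤ N-1. -/

import Mathlib

/-- `x` is an extended equilibrium of the path-graph dynamics with quantization
levels `k` (components indexed by 1,…,N): `f_k(x) = 0` and `x ∈ closure (S_k)`. -/
def IsPathExtendedEquilibrium (N : ℕ) (x : ℕ → ℝ) (k : ℕ → ℤ) : Prop :=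
  ((k 2 : ℝ) - x 1 = 0) ∧
  (∀ i : ℕ, 2 ≤ i → i ≤ N - 1 → (k (i - 1) : ℝ) + (k (i + 1) : ℝ) - 2 * x i = 0) ∧
  ((k (N - 1) : ℝ) - x N = 0) ∧
  (∀ i : ℕ, 1 ≤ i → i ≤ N → (k i : ℝ) - 1/2 ≤ x i ∧ x i ≤ (k i : ℝ) + 1/2)

/-!
At an extended equilibrium `f_k(x) = 0` is a linear system that pins `x` down:
`x₁ = k₂`, `x_N = k_{N-1}`, and every interior `x_i` is the mean of its neighbours' levels.
What remains is membership in `closure (S_k)`. At the ends an integer lies within `1/2` of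
the integer `k_i` only if it equals it, which forces `k₁ = k₂` and `k_N = k_{N-1}`; in the
interior, doubling `|(k_{i-1} + k_{i+1})/2 - k_i| ≤ 1/2` gives the discrete second-difference
bound `|k_{i+1} - 2 k_i + k_{i-1}| ≤ 1`.
-/

theorem Int.cast_mem_Icc_sub_half_add_half_iff (a b : ℤ) :
    (b : ℝ) ∈ Set.Icc ((a : ℝ) - 1 / 2) (a + 1 / 2) ↔ a = b := by
  constructor
  · rintro ⟨hlo, hhi⟩
    have hlo' : a - 1 < b := by exact_mod_cast (by linarith : (a : ℝ) - 1 < b)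
    have hhi' : b < a + 1 := by exact_mod_cast (by linarith : (b : ℝ) < a + 1)
    omega
  · rintro rfl
    constructor <;> linarith

theorem Int.midpoint_mem_Icc_sub_half_add_half_iff (a b c : ℤ) :
    ((a : ℝ) + c) / 2 ∈ Set.Icc ((b : ℝ) - 1 / 2) (b + 1 / 2) ↔ |c - 2 * b + a| ≤ 1 := by
  rw [abs_le, ← Int.cast_le (R := ℝ), ← Int.cast_le (R := ℝ), Set.mem_Icc]
  push_cast
  constructor <;> rintro ⟨hlo, hhi⟩ <;> constructor <;> linarith

theorem path_extended_equilibrium_characterization (N : ℕ) (hN : 3 ≤ N)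
    (x : ℕ → ℝ) (k : ℕ → ℤ) :
    IsPathExtendedEquilibrium N x k ↔
      (x 1 = (k 2 : ℝ) ∧ x N = (k (N - 1) : ℝ) ∧
       (∀ i : ℕ, 2 ≤ i → i ≤ N - 1 → x i = ((k (i - 1) : ℝ) + (k (i + 1) : ℝ)) / 2) ∧
       k 1 = k 2 ∧ k N = k (N - 1) ∧
       (∀ i : ℕ, 2 ≤ i → i ≤ N - 1 → |k (i + 1) - 2 * k i + k (i - 1)| ≤ 1)) := by
  constructor
  · rintro ⟨hfirst, hinterior, hlast, hclosure⟩
    have hx1 : x 1 = k 2 := by linarith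
    have hxN : x N = k (N - 1) := by linarith
    have hmid : ∀ i, 2 ≤ i → i ≤ N - 1 → x i = ((k (i - 1) : ℝ) + k (i + 1)) / 2 :=
      fun i hi hi' => by linarith [hinterior i hi hi']
    refine ⟨hx1, hxN, hmid, ?_, ?_, fun i hi hi' => ?_⟩
    · exact (Int.cast_mem_Icc_sub_half_add_half_iff _ _).1 (hx1 ▸ hclosure 1 le_rfl (by omega))
    · exact (Int.cast_mem_Icc_sub_half_add_half_iff _ _).1 (hxN ▸ hclosure N (by omega) le_rfl)
    · exact (Int.midpoint_mem_Icc_sub_half_add_half_iff _ _ _).1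
        (hmid i hi hi' ▸ hclosure i (by omega) (by omega))
  · rintro ⟨hx1, hxN, hmid, hk1, hkN, hk⟩
    refine ⟨by linarith, fun i hi hi' => by linarith [hmid i hi hi'], by linarith,
      fun i hi hi' => ?_⟩
    rcases (by omega : i = 1 ∨ i = N ∨ (2 ≤ i ∧ i ≤ N - 1)) with rfl | rfl | ⟨hi, hi'⟩
    · rw [hx1]
      exact (Int.cast_mem_Icc_sub_half_add_half_iff _ _).2 hk1
    · rw [hxN]
      exact (Int.cast_mem_Icc_sub_half_add_half_iff _ _).2 hkN
    · rw [hmid i hi hi']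
      exact (Int.midpoint_mem_Icc_sub_half_add_half_iff _ _ _).2 (hk i hi hi')
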